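/- Let β > 1, let n ≥ 1, and let M_n = max_{1≤i≤n} l_i(β), where l_i(β) is the number of consecutive zeros immediately following position i in the infinite β-expansion of 1. Then for any β-admissible word (ε_1,…,ε_n) and any m ≥ M_n, the basic interval I_{n+m+1}(ε_1,…,ε_n,0^{m+1}) is full. -/

import Mathlib

open Filter MeasureTheory Set

/-- The β-transformation T_β(x) = βx − ⌊βx⌋. -/
noncomputable def betaT (β : ℝ) : ℝ → ℝ := fun x => β * x - ⌊β * x⌋

/-- The (i+1)-th digit of the β-expansion of x (0-indexed). -/
noncomputable def betaDigit (β x : ℝ) (i : ℕ) : ℤ := ⌊β * (betaT β)^[i] x⌋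

/-- A finite word is β-admissible if some x ∈ [0,1) has β-expansion beginning with it. -/
def IsAdmissibleWord (β : ℝ) (w : List ℤ) : Prop :=
  ∃ x ∈ Set.Ico (0:ℝ) 1, ∀ i (h : i < w.length), w.get ⟨i, h⟩ = betaDigit β x i

/-- An infinite sequence is β-admissible if it is the digit sequence of some x ∈ [0,1). -/
def IsAdmissibleSeq (β : ℝ) (e : ℕ → ℤ) : Prop :=
  ∃ x ∈ Set.Ico (0:ℝ) 1, ∀ i, e i = betaDigit β x i

/-- The basic interval (cylinder) of a word. -/
def cylinder (β : ℝ) (w : List ℤ) : Set ℝ :=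
  {x | x ∈ Set.Ico (0:ℝ) 1 ∧ ∀ i (h : i < w.length), betaDigit β x i = w.get ⟨i, h⟩}

/-- A basic interval is full if its length is β^{-n}. -/
def IsFull (β : ℝ) (w : List ℤ) : Prop :=
  volume (cylinder β w) = ENNReal.ofReal (1 / β ^ w.length)

-- The infinite β-expansion of 1: the periodic modification if the expansion of 1
-- terminates, and the expansion of 1 itself otherwise (0-indexed).
open Classical in
noncomputable def betaStar (β : ℝ) : ℕ → ℤ :=
  if h : ∃ n, betaDigit β 1 n ≠ 0 ∧ ∀ i, n < i → betaDigit β 1 i = 0 then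
    fun i =>
      if i % (h.choose + 1) = h.choose then betaDigit β 1 h.choose - 1
      else betaDigit β 1 (i % (h.choose + 1))
  else betaDigit β 1

/-- Strict lexicographic order on integer sequences. -/
def lexLt (a b : ℕ → ℤ) : Prop := ∃ n, (∀ i, i < n → a i = b i) ∧ a n < b n

/-- l_n(β): the length of the longest run of zeros following the n-th digit
(1-indexed position n) in the infinite β-expansion of 1. -/
noncomputable def zeroRunLen (β : ℝ) (n : ℕ) : ℕ∞ :=
  ⨆ k ∈ {k : ℕ | ∀ j, j < k → betaStar β (n + j) = 0}, (k : ℕ∞)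

/-- A₀: the set of bases β > 1 with bounded zero-runs in the expansion of 1. -/
def A0 : Set ℝ := {β | 1 < β ∧ ∃ C : ℕ, ∀ n, 1 ≤ n → zeroRunLen β n ≤ (C : ℕ∞)}

/-- The waiting time W_n^β(x,y): first k ≥ 1 with T_β^k x in the n-th basic interval of y. -/
noncomputable def waitingTime (β x y : ℝ) (n : ℕ) : ℕ∞ :=
  sInf {k : ℕ∞ | ∃ m : ℕ, k = (m : ℕ∞) ∧ 1 ≤ m ∧
    ∀ i, i < n → betaDigit β ((betaT β)^[m] x) i = betaDigit β y i}

/-- (log W_n^β(x,y)) / n as an extended real, with value ⊤ when W_n = ∞. -/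
noncomputable def waitingRatio (β x y : ℝ) (n : ℕ) : EReal :=
  if h : waitingTime β x y n = ⊤ then ⊤
  else (((Real.log ((waitingTime β x y n).untop h : ℕ)) / n : ℝ) : EReal)


section prelim
variable {β : ℝ}

lemma betaT_mem (x : ℝ) : betaT β x ∈ Set.Ico (0:ℝ) 1 :=
  ⟨Int.fract_nonneg (β * x), Int.fract_lt_one (β * x)⟩

lemma iter_mem {x : ℝ} (hx : x ∈ Set.Icc (0:ℝ) 1) (i : ℕ) :
    (betaT β)^[i] x ∈ Set.Icc (0:ℝ) 1 := by
  cases i with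
  | zero => simpa using hx
  | succ k =>
    rw [Function.iterate_succ_apply']
    have := betaT_mem (β := β) ((betaT β)^[k] x)
    exact ⟨this.1, this.2.le⟩

lemma iter_mem_Ico {x : ℝ} (hx : x ∈ Set.Ico (0:ℝ) 1) (i : ℕ) :
    (betaT β)^[i] x ∈ Set.Ico (0:ℝ) 1 := by
  cases i with
  | zero => simpa using hx
  | succ k => rw [Function.iterate_succ_apply']; exact betaT_mem _

lemma one_mem_Icc01 : (1:ℝ) ∈ Set.Icc (0:ℝ) 1 := by norm_num

lemma iter_one_mem {β : ℝ} {i : ℕ} (hi : 1 ≤ i) : (betaT β)^[i] 1 ∈ Set.Ico (0:ℝ) 1 := by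
  obtain ⟨k, rfl⟩ : ∃ k, i = k + 1 := ⟨i - 1, by omega⟩
  rw [Function.iterate_succ_apply']
  exact betaT_mem _

lemma digit_nonneg (hβ0 : 0 < β) {x : ℝ} (hx : x ∈ Set.Icc (0:ℝ) 1) (i : ℕ) :
    0 ≤ betaDigit β x i :=
  Int.floor_nonneg.2 (mul_nonneg hβ0.le ((iter_mem (β := β) hx i).1))

lemma digit_le (hβ0 : 0 < β) {x : ℝ} (hx : x ∈ Set.Icc (0:ℝ) 1) (i : ℕ) :
    (betaDigit β x i : ℝ) ≤ β := by
  have h := iter_mem (β := β) hx i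
  calc (betaDigit β x i : ℝ) ≤ β * (betaT β)^[i] x := Int.floor_le _
    _ ≤ β * 1 := by nlinarith [h.2, h.1]
    _ = β := mul_one β

lemma digit_shift (x : ℝ) (k : ℕ) :
    betaDigit β x (k+1) = betaDigit β (betaT β x) k := by
  simp [betaDigit, Function.iterate_succ_apply]

lemma digit_iter (x : ℝ) (i j : ℕ) :
    betaDigit β x (i+j) = betaDigit β ((betaT β)^[i] x) j := by
  simp [betaDigit, add_comm i j, Function.iterate_add_apply]

/-- Finite expansion identity. -/
lemma expand (hβ0 : 0 < β) (r : ℕ) (x : ℝ) :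
    ∑ k ∈ Finset.range r, (betaDigit β x k : ℝ) / β ^ (k+1)
      + (betaT β)^[r] x / β ^ r = x := by
  induction r generalizing x with
  | zero => simp
  | succ r ih =>
    have ihx := ih (betaT β x)
    have hd : (betaDigit β x 0 : ℝ) = β * x - betaT β x := by
      simp [betaDigit, betaT]
    rw [Function.iterate_succ_apply, Finset.sum_range_succ']
    simp only [digit_shift]
    have e1 : ∀ k : ℕ, (betaDigit β (betaT β x) k : ℝ)/β^(k+1+1)
        = (betaDigit β (betaT β x) k : ℝ)/β^(k+1)/β := by
      intro k; rw [pow_succ]; ring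
    simp only [e1, ← Finset.sum_div]
    have h2 : ∑ k ∈ Finset.range r, (betaDigit β (betaT β x) k : ℝ) / β ^ (k+1)
        = betaT β x - (betaT β)^[r] (betaT β x) / β ^ r := by linarith
    rw [h2, hd, pow_succ, pow_zero]
    have hβr : (β:ℝ) ^ r ≠ 0 := by positivity
    have hβ' : (β:ℝ) ≠ 0 := ne_of_gt hβ0
    field_simp
    ring

lemma sum_shift (x : ℝ) (r : ℕ) (hβ0 : 0 < β) :
    ∑ k ∈ Finset.range (r+1), (betaDigit β x k : ℝ)/β^(k+1)
      = ((betaDigit β x 0 : ℝ)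
          + ∑ k ∈ Finset.range r, (betaDigit β (betaT β x) k : ℝ)/β^(k+1))/β := by
  rw [Finset.sum_range_succ']
  simp only [digit_shift]
  have e1 : ∀ k : ℕ, (betaDigit β (betaT β x) k : ℝ)/β^(k+1+1)
      = (betaDigit β (betaT β x) k : ℝ)/β^(k+1)/β := by
    intro k; rw [pow_succ]; ring
  simp only [e1, ← Finset.sum_div]
  rw [pow_one, add_div, add_comm]

end prelim

section star
variable {β : ℝ}

lemma star_nonneg (hβ : 1 < β) (i : ℕ) : 0 ≤ betaStar β i := by
  have hβ0 : 0 < β := lt_trans one_pos hβ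
  have hd : ∀ k, 0 ≤ betaDigit β 1 k := digit_nonneg hβ0 one_mem_Icc01
  rw [betaStar]
  by_cases h : ∃ n, betaDigit β 1 n ≠ 0 ∧ ∀ i, n < i → betaDigit β 1 i = 0
  · rw [dif_pos h]
    split_ifs with hc
    · have h1 := h.choose_spec.1
      have := hd h.choose
      omega
    · exact hd _
  · rw [dif_neg h]; exact hd _

lemma star_le (hβ : 1 < β) (i : ℕ) : (betaStar β i : ℝ) ≤ β := by
  have hβ0 : 0 < β := lt_trans one_pos hβ
  have hd : ∀ k, (betaDigit β 1 k : ℝ) ≤ β := digit_le hβ0 one_mem_Icc01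
  rw [betaStar]
  by_cases h : ∃ n, betaDigit β 1 n ≠ 0 ∧ ∀ i, n < i → betaDigit β 1 i = 0
  · rw [dif_pos h]
    split_ifs with hc
    · push_cast; linarith [hd h.choose]
    · exact hd _
  · rw [dif_neg h]; exact hd _

noncomputable def tauB (β : ℝ) (i : ℕ) : ℝ := ∑' j : ℕ, (betaStar β (i+j) : ℝ) / β ^ (j+1)

lemma summable_aux (hβ : 1 < β) (f : ℕ → ℤ) (h0 : ∀ j, 0 ≤ f j) (h1 : ∀ j, (f j : ℝ) ≤ β) :
    Summable (fun j : ℕ => (f j : ℝ) / β ^ (j+1)) := by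
  have hβ0 : 0 < β := lt_trans one_pos hβ
  refine Summable.of_nonneg_of_le (fun j => by have := h0 j; positivity) (fun j => ?_)
    (summable_geometric_of_lt_one (inv_nonneg.2 hβ0.le) (inv_lt_one_of_one_lt₀ hβ))
  have hb : (0:ℝ) < β ^ (j+1) := by positivity
  rw [inv_pow, div_le_iff₀ hb]
  calc (f j : ℝ) ≤ β := h1 j
    _ = (β ^ j)⁻¹ * β ^ (j+1) := by
        rw [pow_succ]; field_simp

lemma summable_star (hβ : 1 < β) (i : ℕ) :
    Summable (fun j : ℕ => (betaStar β (i+j) : ℝ) / β ^ (j+1)) :=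
  summable_aux hβ _ (fun j => star_nonneg hβ _) (fun j => star_le hβ _)

lemma summable_digits (hβ : 1 < β) {x : ℝ} (hx : x ∈ Set.Icc (0:ℝ) 1) :
    Summable (fun j : ℕ => (betaDigit β x j : ℝ) / β ^ (j+1)) :=
  summable_aux hβ _ (digit_nonneg (lt_trans one_pos hβ) hx) (digit_le (lt_trans one_pos hβ) hx)

lemma tau_nonneg (hβ : 1 < β) (i : ℕ) : 0 ≤ tauB β i := by
  have hβ0 : 0 < β := lt_trans one_pos hβ
  refine tsum_nonneg (fun j => ?_)
  have := star_nonneg hβ (i+j)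
  positivity

lemma tsum_digits (hβ : 1 < β) {x : ℝ} (hx : x ∈ Set.Icc (0:ℝ) 1) :
    ∑' j : ℕ, (betaDigit β x j : ℝ) / β ^ (j+1) = x := by
  have hβ0 : 0 < β := lt_trans one_pos hβ
  have hsum := summable_digits hβ hx
  refine tendsto_nhds_unique hsum.hasSum.tendsto_sum_nat ?_
  have h1 : ∀ r : ℕ, ∑ k ∈ Finset.range r, (betaDigit β x k : ℝ) / β ^ (k+1)
      = x - (betaT β)^[r] x / β ^ r := by
    intro r; linarith [expand hβ0 r x]
  simp only [h1]
  have h2 : Tendsto (fun r : ℕ => (betaT β)^[r] x / β ^ r) atTop (nhds 0) := by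
    have hg : Tendsto (fun r : ℕ => (β⁻¹) ^ r) atTop (nhds 0) :=
      tendsto_pow_atTop_nhds_zero_of_lt_one (by positivity) (inv_lt_one_of_one_lt₀ hβ)
    refine squeeze_zero (fun r => ?_) (fun r => ?_) hg
    · have := (iter_mem (β := β) hx r).1
      positivity
    · have h3 := (iter_mem (β := β) hx r).2
      have hb : (0:ℝ) < β ^ r := by positivity
      rw [inv_pow, ← one_div]
      gcongr
  have := tendsto_const_nhds (x := x) (f := atTop (α := ℕ)).sub h2
  simpa using this

lemma tau_rec (hβ : 1 < β) (i : ℕ) :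
    tauB β i = ((betaStar β i : ℝ) + tauB β (i+1))/β := by
  have hβ0 : 0 < β := lt_trans one_pos hβ
  have hβ' : (β:ℝ) ≠ 0 := ne_of_gt hβ0
  rw [tauB, Summable.tsum_eq_zero_add (summable_star hβ i)]
  have e1 : ∀ j : ℕ, (betaStar β (i+(j+1)) : ℝ) / β ^ (j+1+1)
      = (betaStar β ((i+1)+j) : ℝ) / β ^ (j+1) * β⁻¹ := by
    intro j
    rw [show i+(j+1) = (i+1)+j by ring, pow_succ]
    field_simp
  simp only [e1]
  rw [tsum_mul_right]
  rw [tauB]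
  field_simp
  simp only [add_zero, zero_add, pow_one]
  ring

lemma tau_partial (hβ : 1 < β) (p i : ℕ) :
    tauB β i = ∑ k ∈ Finset.range p, (betaStar β (i+k) : ℝ)/β^(k+1) + tauB β (i+p)/β^p := by
  have hβ0 : 0 < β := lt_trans one_pos hβ
  have hβ' : (β:ℝ) ≠ 0 := ne_of_gt hβ0
  induction p with
  | zero => simp
  | succ p ih =>
    rw [ih, Finset.sum_range_succ, tau_rec hβ (i+p)]
    have hb : (β:ℝ) ^ p ≠ 0 := by positivity
    rw [show i+(p+1) = i+p+1 by ring, pow_succ]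
    field_simp
    ring

end star
section tauone
variable {β : ℝ}

lemma tau_spec (hβ : 1 < β) : tauB β 0 = 1 ∧ ∀ i, tauB β i ≤ 1 := by
  have hβ0 : 0 < β := lt_trans one_pos hβ
  have hβ' : (β:ℝ) ≠ 0 := ne_of_gt hβ0
  by_cases h : ∃ n, betaDigit β 1 n ≠ 0 ∧ ∀ i, n < i → betaDigit β 1 i = 0
  case neg =>
    have hstar : betaStar β = betaDigit β 1 := by rw [betaStar, dif_neg h]
    have htau : ∀ i, tauB β i = (betaT β)^[i] 1 := by
      intro i
      have : ∀ j : ℕ, (betaStar β (i+j) : ℝ) / β ^ (j+1)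
          = (betaDigit β ((betaT β)^[i] 1) j : ℝ) / β ^ (j+1) := by
        intro j; rw [hstar, digit_iter]
      rw [tauB, tsum_congr this, tsum_digits hβ (iter_mem one_mem_Icc01 i)]
    constructor
    · rw [htau]; simp
    · intro i; rw [htau]; exact (iter_mem (β := β) one_mem_Icc01 i).2
  case pos =>
    set p := h.choose with hpdef
    obtain ⟨hp1, hp2⟩ := h.choose_spec
    have hstar : ∀ i, betaStar β i
        = if i % (p+1) = p then betaDigit β 1 p - 1 else betaDigit β 1 (i % (p+1)) := by
      intro i; rw [betaStar, dif_pos h]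
    -- T^[p+1] 1 = 0
    have hiterZ : ∀ j : ℕ, (betaT β)^[p+1+j] 1 = β ^ j * ((betaT β)^[p+1] 1) := by
      intro j
      induction j with
      | zero => simp
      | succ j ih =>
        have hd0 : betaDigit β 1 (p+1+j) = 0 := hp2 _ (by omega)
        have : (betaT β)^[p+1+(j+1)] 1 = betaT β ((betaT β)^[p+1+j] 1) := by
          rw [show p+1+(j+1) = (p+1+j)+1 by ring, Function.iterate_succ_apply']
        rw [this, ih]
        have hfl : ⌊β * (β ^ j * (betaT β)^[p+1] 1)⌋ = 0 := by
          have : β * (β ^ j * (betaT β)^[p+1] 1) = β * ((betaT β)^[p+1+j] 1) := by rw [ih]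
          rw [this]
          exact hd0
        rw [betaT, hfl]
        push_cast
        ring
    have hTP : (betaT β)^[p+1] 1 = 0 := by
      by_contra hne
      have hmem := iter_one_mem (β := β) (i := p+1) (by omega)
      have hpos : 0 < (betaT β)^[p+1] 1 := by
        rcases lt_or_eq_of_le hmem.1 with h' | h'
        · exact h'
        · exact absurd h'.symm hne
      obtain ⟨j, hj⟩ := pow_unbounded_of_one_lt (1 / ((betaT β)^[p+1] 1)) hβ
      have hlt : (betaT β)^[p+1+j] 1 < 1 := (iter_one_mem (β := β) (i := p+1+j) (by omega)).2
      rw [hiterZ j] at hlt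
      rw [div_lt_iff₀ hpos] at hj
      nlinarith
    have hone : ∑ k ∈ Finset.range (p+1), (betaDigit β 1 k : ℝ)/β^(k+1) = 1 := by
      have := expand hβ0 (p+1) 1
      rw [hTP] at this
      simpa using this
    have hper : ∀ i, betaStar β (i + (p+1)) = betaStar β i := by
      intro i; rw [hstar, hstar, Nat.add_mod_right]
    have htshift : ∀ i, tauB β (i + (p+1)) = tauB β i := by
      intro i
      rw [tauB, tauB]
      refine tsum_congr fun j => ?_
      rw [show i+(p+1)+j = (i+j)+(p+1) by ring, hper]
    have hperiod_sum : ∑ k ∈ Finset.range (p+1), (betaStar β k : ℝ)/β^(k+1)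
        = 1 - 1/β^(p+1) := by
      have e1 : ∀ k ∈ Finset.range (p+1), (betaStar β k : ℝ)/β^(k+1)
          = (betaDigit β 1 k : ℝ)/β^(k+1) - (if k = p then 1/β^(p+1) else 0) := by
        intro k hk
        have hklt : k < p + 1 := Finset.mem_range.1 hk
        rw [hstar, Nat.mod_eq_of_lt hklt]
        by_cases hkp : k = p
        · subst hkp
          simp only [if_pos rfl]
          push_cast
          ring
        · simp only [if_neg hkp]
          ring
      rw [Finset.sum_congr rfl e1, Finset.sum_sub_distrib, hone,
        Finset.sum_ite_eq' (Finset.range (p+1)) p (fun _ => 1/β^(p+1)),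
        if_pos (Finset.self_mem_range_succ p)]
    have htau0 : tauB β 0 = 1 := by
      have heq := tau_partial hβ (p+1) 0
      simp only [Nat.zero_add, zero_add] at heq
      rw [hperiod_sum, show tauB β (p+1) = tauB β 0 from by simpa using htshift 0] at heq
      have hc1 : 1/β^(p+1) < 1 := by
        rw [div_lt_one (by positivity)]
        exact one_lt_pow₀ hβ (by omega)
      have h1 : tauB β 0 * (1 - 1/β^(p+1)) = 1 * (1 - 1/β^(p+1)) := by
        have hb : (β:ℝ)^(p+1) ≠ 0 := by positivity
        field_simp at heq ⊢
        linarith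
      exact mul_right_cancel₀ (by linarith) h1
    refine ⟨htau0, fun i => ?_⟩
    -- reduce to i % (p+1)
    have hq : ∀ q s : ℕ, tauB β (s + (p+1)*q) = tauB β s := by
      intro q
      induction q with
      | zero => simp
      | succ q ih =>
        intro s
        rw [show s + (p+1)*(q+1) = (s + (p+1)*q) + (p+1) by ring, htshift, ih]
    have hmod : tauB β i = tauB β (i % (p+1)) := by
      conv_lhs => rw [← Nat.mod_add_div i (p+1)]
      exact hq _ _
    rw [hmod]
    set s := i % (p+1) with hs
    have hslt : s < p + 1 := Nat.mod_lt _ (by omega)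
    -- 1 = ∑_{k<s} star k + tau s / β^s  and 1 = ∑_{k<s} d_k + T^s 1/β^s
    have heq1 := tau_partial hβ s 0
    rw [htau0] at heq1
    simp only [Nat.zero_add, zero_add] at heq1
    have hsame : ∑ k ∈ Finset.range s, (betaStar β k : ℝ)/β^(k+1)
        = ∑ k ∈ Finset.range s, (betaDigit β 1 k : ℝ)/β^(k+1) := by
      refine Finset.sum_congr rfl fun k hk => ?_
      have hklt : k < s := Finset.mem_range.1 hk
      have : k < p + 1 := by omega
      rw [hstar, Nat.mod_eq_of_lt this, if_neg (by omega)]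
    have heq2 := expand hβ0 s 1
    rw [hsame] at heq1
    have hb : (0:ℝ) < β ^ s := by positivity
    have : tauB β s = (betaT β)^[s] 1 := by
      have h5 : tauB β s / β^s = (betaT β)^[s] 1 / β^s := by linarith
      field_simp at h5
      exact h5
    rw [this]
    exact (iter_mem (β := β) one_mem_Icc01 s).2

lemma tau_zero (hβ : 1 < β) : tauB β 0 = 1 := (tau_spec hβ).1
lemma tau_le_one (hβ : 1 < β) (i : ℕ) : tauB β i ≤ 1 := (tau_spec hβ).2 i

lemma tau_lower (hβ : 1 < β) {i m : ℕ} (hj : ∃ j, j ≤ m ∧ betaStar β (i+j) ≠ 0) :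
    1/β^(m+1) ≤ tauB β i := by
  have hβ0 : 0 < β := lt_trans one_pos hβ
  obtain ⟨j, hjm, hne⟩ := hj
  have h1 : (1:ℤ) ≤ betaStar β (i+j) := by
    have := star_nonneg hβ (i+j); omega
  have h2 : (1:ℝ)/β^(m+1) ≤ (betaStar β (i+j) : ℝ)/β^(j+1) := by
    have hb1 : (0:ℝ) < β^(m+1) := by positivity
    have hb2 : (0:ℝ) < β^(j+1) := by positivity
    rw [div_le_div_iff₀ hb1 hb2]
    have hcast : (1:ℝ) ≤ (betaStar β (i+j) : ℝ) := by exact_mod_cast h1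
    have hple : (β:ℝ)^(j+1) ≤ β^(m+1) := pow_le_pow_right₀ hβ.le (by omega)
    nlinarith
  refine le_trans h2 (Summable.le_tsum (summable_star hβ i) j fun k _ => ?_)
  have := star_nonneg hβ (i+k)
  positivity

end tauone
section key
variable {β : ℝ}

lemma key (hβ : 1 < β) {n m : ℕ}
    (hrun : ∀ i, 1 ≤ i → i ≤ n → ∃ j, j ≤ m ∧ betaStar β (i+j) ≠ 0) :
    ∀ r i (x : ℝ), i + r ≤ n → 0 ≤ x → x < tauB β i →
    ∑ k ∈ Finset.range r, (betaDigit β x k : ℝ)/β^(k+1) + 1/β^(r+m+1) ≤ tauB β i := by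
  have hβ0 : 0 < β := lt_trans one_pos hβ
  intro r
  induction r with
  | zero =>
    intro i x hin hx0 hx
    simp only [Finset.range_zero, Finset.sum_empty, zero_add]
    rcases Nat.eq_zero_or_pos i with hi | hi
    · subst hi
      rw [tau_zero hβ]
      rw [div_le_one (by positivity)]
      exact one_le_pow₀ hβ.le
    · exact tau_lower hβ (hrun i hi (by omega))
  | succ r ih =>
    intro i x hin hx0 hx
    have hx1 : x < 1 := lt_of_lt_of_le hx (tau_le_one hβ i)
    have hbrec : β * tauB β i = (betaStar β i : ℝ) + tauB β (i+1) := by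
      rw [tau_rec hβ i]; field_simp
    have hd0 : (betaDigit β x 0 : ℝ) = (⌊β * x⌋ : ℤ) := by simp [betaDigit]
    have hdle : betaDigit β x 0 ≤ betaStar β i := by
      have h1 : (betaDigit β x 0 : ℝ) ≤ β * x := by rw [hd0]; exact Int.floor_le _
      have h2 : β * x < β * tauB β i := by nlinarith
      have h3 : (betaDigit β x 0 : ℝ) < (betaStar β i : ℝ) + 1 := by
        have := tau_le_one hβ (i+1); linarith [hbrec]
      have : betaDigit β x 0 < betaStar β i + 1 := by exact_mod_cast h3
      omega
    have hTx := betaT_mem (β := β) x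
    have hTeq : betaT β x = β * x - (betaDigit β x 0 : ℝ) := by
      rw [hd0]; simp [betaT]
    have hsplit : (1:ℝ)/β^(r+1+m+1) = (1/β^(r+m+1))/β := by
      rw [show r+1+m+1 = (r+m+1)+1 by ring, pow_succ]; ring
    rw [sum_shift x r hβ0, hsplit, ← add_div, tau_rec hβ i]
    rw [div_le_div_iff_of_pos_right hβ0]
    rcases eq_or_lt_of_le hdle with heq | hlt
    · have hTlt : betaT β x < tauB β (i+1) := by
        rw [hTeq, heq]
        have h2 : β * x < β * tauB β i := by nlinarith
        linarith [hbrec]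
      have hih := ih (i+1) (betaT β x) (by omega) hTx.1 hTlt
      have hcast : (betaDigit β x 0 : ℝ) = (betaStar β i : ℝ) := by exact_mod_cast heq
      linarith
    · have hih := ih 0 (betaT β x) (by omega) hTx.1 (by rw [tau_zero hβ]; exact hTx.2)
      rw [tau_zero hβ] at hih
      have hcast : (betaDigit β x 0 : ℝ) ≤ (betaStar β i : ℝ) - 1 := by
        have : betaDigit β x 0 ≤ betaStar β i - 1 := by omega
        exact_mod_cast this
      have := tau_nonneg hβ (i+1)
      linarith
end key
section construct
variable {β : ℝ}

lemma construct (hβ : 1 < β) :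
    ∀ r (x y : ℝ), x ∈ Set.Ico (0:ℝ) 1 → 0 ≤ y →
    (∀ i, i ≤ r → ∑ k ∈ Finset.range (r-i), (betaDigit β x (i+k) : ℝ)/β^(k+1) + y/β^(r-i) < 1) →
    (∀ k, k < r → betaDigit β (∑ k ∈ Finset.range r, (betaDigit β x k : ℝ)/β^(k+1) + y/β^r) k
        = betaDigit β x k)
    ∧ (betaT β)^[r] (∑ k ∈ Finset.range r, (betaDigit β x k : ℝ)/β^(k+1) + y/β^r) = y
    ∧ (∑ k ∈ Finset.range r, (betaDigit β x k : ℝ)/β^(k+1) + y/β^r) ∈ Set.Ico (0:ℝ) 1 := by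
  have hβ0 : 0 < β := lt_trans one_pos hβ
  intro r
  induction r with
  | zero =>
    intro x y hx hy0 hcond
    have h0 := hcond 0 le_rfl
    simp only [Nat.sub_zero, Finset.range_zero, Finset.sum_empty, pow_zero, div_one,
      zero_add] at h0 ⊢
    exact ⟨fun k hk => absurd hk (by omega), rfl, ⟨hy0, h0⟩⟩
  | succ r ih =>
    intro x y hx hy0 hcond
    set x'' := ∑ k ∈ Finset.range r, (betaDigit β (betaT β x) k : ℝ)/β^(k+1) + y/β^r with hx''def
    have hcond' : ∀ i, i ≤ r →
        ∑ k ∈ Finset.range (r-i), (betaDigit β (betaT β x) (i+k) : ℝ)/β^(k+1) + y/β^(r-i) < 1 := by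
      intro i hi
      have := hcond (i+1) (by omega)
      have hrr : r + 1 - (i+1) = r - i := by omega
      rw [hrr] at this
      have hsame : ∀ k ∈ Finset.range (r-i), (betaDigit β x (i+1+k) : ℝ)/β^(k+1)
          = (betaDigit β (betaT β x) (i+k) : ℝ)/β^(k+1) := by
        intro k _
        rw [show i+1+k = (i+k)+1 by ring, digit_shift]
      rw [Finset.sum_congr rfl hsame] at this
      exact this
    obtain ⟨hdig'', hT'', hmem''⟩ := ih (betaT β x) y (betaT_mem x) hy0 hcond'
    set x' := ∑ k ∈ Finset.range (r+1), (betaDigit β x k : ℝ)/β^(k+1) + y/β^(r+1) with hx'def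
    have hx'eq : x' = ((betaDigit β x 0 : ℝ) + x'')/β := by
      rw [hx'def, sum_shift x r hβ0, hx''def]
      rw [pow_succ]
      field_simp
      ring
    have hβx' : β * x' = (betaDigit β x 0 : ℝ) + x'' := by
      rw [hx'eq]; field_simp
    have hfl : ⌊β * x'⌋ = betaDigit β x 0 := by
      rw [hβx', add_comm, Int.floor_add_intCast, Int.floor_eq_zero_iff.2 hmem'']
      ring
    have hd0 : betaDigit β x' 0 = betaDigit β x 0 := by
      simp only [betaDigit, Function.iterate_zero_apply]
      exact hfl
    have hTx' : betaT β x' = x'' := by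
      rw [betaT, hfl, hβx']
      ring
    have hdigs : ∀ k, k < r+1 → betaDigit β x' k = betaDigit β x k := by
      intro k hk
      cases k with
      | zero => exact hd0
      | succ j =>
        rw [digit_shift, hTx', hdig'' j (by omega), ← digit_shift]
    have hmem' : x' ∈ Set.Ico (0:ℝ) 1 := by
      constructor
      · have hd := digit_nonneg hβ0 ⟨hx.1, hx.2.le⟩ 0
        have : (0:ℝ) ≤ (betaDigit β x 0 : ℝ) := by exact_mod_cast hd
        rw [hx'eq]
        have := hmem''.1
        positivity
      · have := hcond 0 (by omega)
        simp only [Nat.sub_zero, Nat.zero_add] at this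
        rw [hx'def]
        exact this
    refine ⟨hdigs, ?_, hmem'⟩
    rw [Function.iterate_succ_apply, hTx', hT'']
end construct

lemma small_iter (hβ : 1 < β) {y : ℝ} {m : ℕ} (hy0 : 0 ≤ y) (hy : y < 1/β^(m+1)) :
    ∀ j, j ≤ m → (betaT β)^[j] y = β^j * y ∧ betaDigit β y j = 0 := by
  have hβ0 : 0 < β := lt_trans one_pos hβ
  have hb : ∀ j : ℕ, j ≤ m + 1 → β^j * y < 1 := by
    intro j hj
    have h1 : β^j * y < β^j / β^(m+1) := by
      rw [div_eq_mul_inv]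
      have : (0:ℝ) < β^j := by positivity
      calc β^j * y < β^j * (1/β^(m+1)) := by
            exact mul_lt_mul_of_pos_left hy this
        _ = β^j * (β^(m+1))⁻¹ := by rw [one_div]
    have h2 : β^j / β^(m+1) ≤ 1 := by
      rw [div_le_one (by positivity)]
      exact pow_le_pow_right₀ hβ.le hj
    linarith
  have hiter : ∀ j, j ≤ m → (betaT β)^[j] y = β^j * y := by
    intro j
    induction j with
    | zero => intro _; simp
    | succ j ihj =>
      intro hj
      rw [Function.iterate_succ_apply', ihj (by omega), betaT]
      have h1 : (0:ℝ) ≤ β * (β^j * y) := by positivity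
      have h2 : β * (β^j * y) < 1 := by
        have := hb (j+1) (by omega)
        rw [pow_succ] at this
        nlinarith
      rw [Int.floor_eq_zero_iff.2 ⟨h1, h2⟩]
      push_cast
      rw [pow_succ]
      ring
  intro j hj
  refine ⟨hiter j hj, ?_⟩
  rw [betaDigit, hiter j hj]
  have h1 : (0:ℝ) ≤ β * (β^j * y) := by positivity
  have h2 : β * (β^j * y) < 1 := by
    have := hb (j+1) (by omega)
    rw [pow_succ] at this
    nlinarith
  exact Int.floor_eq_zero_iff.2 ⟨h1, h2⟩

lemma run_conv {β : ℝ} {m i : ℕ} (h : zeroRunLen β i ≤ (m:ℕ∞)) :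
    ∃ j, j ≤ m ∧ betaStar β (i+j) ≠ 0 := by
  by_contra hc
  push_neg at hc
  have hmem : (m+1) ∈ {k : ℕ | ∀ j, j < k → betaStar β (i + j) = 0} :=
    fun j hj => hc j (by omega)
  have hle : ((m+1 : ℕ) : ℕ∞) ≤ zeroRunLen β i :=
    le_biSup (fun k : ℕ => (k : ℕ∞)) hmem
  have h2 := le_trans hle h
  have h3 : m + 1 ≤ m := by exact_mod_cast h2
  omega

/-- If m is at least the maximum zero-run length M_n = max_{1≤i≤n} l_i(β), then for any
admissible word of length n, appending m+1 zeros gives a full basic interval. -/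
theorem full_append_enough_zeros (β : ℝ) (hβ : 1 < β) (n : ℕ) (hn : 1 ≤ n) (m : ℕ)
    (hm : ∀ i, 1 ≤ i → i ≤ n → zeroRunLen β i ≤ (m : ℕ∞))
    (w : List ℤ) (hlen : w.length = n) (hw : IsAdmissibleWord β w) :
    IsFull β (w ++ List.replicate (m + 1) 0) := by
  have hβ0 : 0 < β := lt_trans one_pos hβ
  obtain ⟨x₀, hx₀, hdig₀⟩ := hw
  have hrun : ∀ i, 1 ≤ i → i ≤ n → ∃ j, j ≤ m ∧ betaStar β (i+j) ≠ 0 :=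
    fun i h1 h2 => run_conv (hm i h1 h2)
  set L := n + m + 1 with hL
  have hlenL : (w ++ List.replicate (m+1) (0:ℤ)).length = L := by
    simp only [List.length_append, List.length_replicate, hlen, hL]
    omega
  set V := ∑ k ∈ Finset.range n, (betaDigit β x₀ k : ℝ)/β^(k+1) with hV
  have hset : _root_.cylinder β (w ++ List.replicate (m+1) 0) = Set.Ico V (V + 1/β^L) := by
    ext x
    simp only [_root_.cylinder, Set.mem_setOf_eq, Set.mem_Ico]
    constructor
    · rintro ⟨hxI, hdig⟩
      have hexp := expand hβ0 L x
      have hzero : ∀ k, n ≤ k → k < L → betaDigit β x k = 0 := by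
        intro k h1 h2
        have h3 : k < (w ++ List.replicate (m+1) (0:ℤ)).length := by rw [hlenL]; omega
        rw [hdig k h3]
        have h8 : (w ++ List.replicate (m+1) (0:ℤ)).get ⟨k, h3⟩
            = (w ++ List.replicate (m+1) (0:ℤ))[k]'h3 := rfl
        rw [h8, List.getElem_append_right (by omega)]
        simp
      have hwd : ∀ k, k < n → betaDigit β x k = betaDigit β x₀ k := by
        intro k hk
        have h3 : k < (w ++ List.replicate (m+1) (0:ℤ)).length := by rw [hlenL]; omega
        have h5 : (w ++ List.replicate (m+1) (0:ℤ)).get ⟨k, h3⟩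
            = w.get ⟨k, by omega⟩ := by
          simp [List.get_eq_getElem, List.getElem_append_left (show k < w.length by omega)]
        rw [hdig k h3, h5, hdig₀ k (by omega)]
      have hsum : ∑ k ∈ Finset.range L, (betaDigit β x k : ℝ)/β^(k+1) = V := by
        have h6 : ∑ k ∈ Finset.range L, (betaDigit β x k : ℝ)/β^(k+1)
            = ∑ k ∈ Finset.range n, (betaDigit β x k : ℝ)/β^(k+1) := by
          refine (Finset.sum_subset (Finset.range_subset_range.2 (by omega)) ?_).symm
          intro k hkL hkn
          rw [hzero k (by simpa using hkn) (Finset.mem_range.1 hkL)]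
          simp
        rw [h6, hV]
        exact Finset.sum_congr rfl fun k hk => by rw [hwd k (Finset.mem_range.1 hk)]
      rw [hsum] at hexp
      have hTL := iter_mem_Ico (β := β) hxI L
      have h7 : 0 ≤ (betaT β)^[L] x / β^L := div_nonneg hTL.1 (by positivity)
      have h8 : (betaT β)^[L] x / β^L < 1/β^L :=
        (div_lt_div_iff_of_pos_right (by positivity)).2 hTL.2
      exact ⟨by linarith, by linarith⟩
    · rintro ⟨hxV, hxV2⟩
      set y := (x - V) * β^n with hy
      have hy0 : 0 ≤ y := mul_nonneg (by linarith) (by positivity)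
      have hyb : y < 1/β^(m+1) := by
        have h1 : x - V < 1/β^L := by linarith
        have h2 : (x-V)*β^n < (1/β^L)*β^n :=
          mul_lt_mul_of_pos_right h1 (by positivity)
        have h3 : (1/β^L)*β^n = 1/β^(m+1) := by
          rw [hL, show n+m+1 = (m+1)+n by ring, pow_add]
          have hb1 : (β:ℝ)^(m+1) ≠ 0 := by positivity
          have hb2 : (β:ℝ)^n ≠ 0 := by positivity
          field_simp
        rw [hy]
        rw [h3] at h2
        exact h2
      have hcond : ∀ i, i ≤ n →
          ∑ k ∈ Finset.range (n-i), (betaDigit β x₀ (i+k) : ℝ)/β^(k+1) + y/β^(n-i) < 1 := by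
        intro i hi
        rcases eq_or_lt_of_le hi with rfl | hin
        · simp only [Nat.sub_self, pow_zero, Finset.range_zero, Finset.sum_empty, zero_add,
            div_one]
          have h4 : 1/β^(m+1) ≤ 1 := by
            rw [div_le_one (by positivity)]
            exact one_le_pow₀ hβ.le
          linarith
        · have hkey := key hβ hrun (n-i) 0 ((betaT β)^[i] x₀) (by omega)
            (iter_mem_Ico hx₀ i).1
            (by rw [tau_zero hβ]; exact (iter_mem_Ico hx₀ i).2)
          rw [tau_zero hβ] at hkey
          have hsame : ∀ k ∈ Finset.range (n-i), (betaDigit β x₀ (i+k):ℝ)/β^(k+1)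
              = (betaDigit β ((betaT β)^[i] x₀) k : ℝ)/β^(k+1) := fun k _ => by
            rw [digit_iter]
          rw [Finset.sum_congr rfl hsame]
          have h2 : y/β^(n-i) < 1/β^(n-i+m+1) := by
            have hbp : (0:ℝ) < β^(n-i) := by positivity
            calc y / β^(n-i) < (1/β^(m+1))/β^(n-i) := (div_lt_div_iff_of_pos_right hbp).2 hyb
              _ = 1/β^(n-i+m+1) := by
                  rw [div_div, ← pow_add, show (m+1)+(n-i) = n-i+m+1 by omega]
          linarith [hkey, h2]
      obtain ⟨hdigs, hTn, hmem⟩ := construct hβ n x₀ y hx₀ hy0 hcond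
      have hx'x : ∑ k ∈ Finset.range n, (betaDigit β x₀ k : ℝ)/β^(k+1) + y/β^n = x := by
        rw [← hV, hy]
        have hb : (β:ℝ)^n ≠ 0 := by positivity
        field_simp
        ring
      rw [hx'x] at hdigs hTn hmem
      refine ⟨hmem, ?_⟩
      intro i hilt
      have hiL : i < L := by rw [hlenL] at hilt; exact hilt
      by_cases hin : i < n
      · rw [hdigs i hin]
        have h5 : (w ++ List.replicate (m+1) (0:ℤ)).get ⟨i, hilt⟩
            = w.get ⟨i, by omega⟩ := by
          simp [List.get_eq_getElem, List.getElem_append_left (show i < w.length by omega)]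
        rw [h5]
        exact (hdig₀ i _).symm
      · push_neg at hin
        obtain ⟨j, rfl⟩ : ∃ j, i = n + j := ⟨i - n, by omega⟩
        have hjm : j ≤ m := by omega
        have h6 : betaDigit β x (n+j) = betaDigit β y j := by rw [digit_iter, hTn]
        have h7 := (small_iter hβ hy0 hyb j hjm).2
        rw [h6, h7]
        have h8 : (w ++ List.replicate (m+1) (0:ℤ)).get ⟨n+j, hilt⟩
            = (w ++ List.replicate (m+1) (0:ℤ))[n+j]'hilt := rfl
        rw [h8, List.getElem_append_right (by omega)]
        simp
  unfold IsFull
  rw [hset, Real.volume_Ico, hlenL]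
  congr 1
  ring
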